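/- arXiv:2401.00302 — 2 statements merged into one kernel-verified Lean document; each statement's English description precedes it below -/
import Mathlib

section
/- In the setting below, assume in addition that cf(ω^{δ_α}) ≥ κ for all α < κ. Then a subset C ⊆ L is a copy of L (C ∈ P(L)) if and only if for every α < κ the set S^α_C := {β < κ : ω^{δ_α} order-embeds into the suborder L_β ∩ C} has cardinality κ. -/
open Ordinal Set Cardinal

/-- The set of copies of an ordinal `a`: subsets of the interval `[0, a)` that are
ranges of order-embeddings of `Iio a` into itself. -/
def Copies (a : Ordinal.{0}) : Set (Set Ordinal.{0}) :=
  {A | ∃ f : Set.Iio a ↪o Set.Iio a, A = Subtype.val '' Set.range ⇑f}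

/-!
Since `C ⊆ L` and `L` has type `ω^δ`, `C` is a copy of `L` iff its order type is at least `ω^δ`.

If `C` is a copy but some `S^α_C` has size `< κ`, then, `κ` being regular, `S^α_C` is bounded by
some `γ < κ`; pick `b ∈ L_γ`. Past `b`, `C` meets each block in a set of type `< ω^{δ_α}`, and any
proper initial segment of these blocks is indexed by fewer than `κ ≤ cf(ω^{δ_α})` ordinals, so, as
`ω^{δ_α}` is additively indecomposable, `C \ [0, b)` has type `≤ ω^{δ_α}`. Hence `C` has type
`≤ b + ω^{δ_α} < ω^δ`, a contradiction.

Conversely, if every `S^α_C` is unbounded in `κ`, regularity of `κ` lets us choose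
`β_α ∈ S^α_C` strictly increasing in `α` by transfinite recursion; the embeddings
`L_α ↪ L_{β_α} ∩ C` glue to an embedding of `L` into `C`.
-/

universe u

section OrderType

variable {α : Type u} [LinearOrder α] [WellFoundedLT α]

theorem typein_mk_eq_typeLT_inter_Iio {s : Set α} {x : α} (hx : x ∈ s) :
    typein ((· < ·) : s → s → Prop) ⟨x, hx⟩ = typeLT ↥(s ∩ Iio x) := by
  rw [← type_Iio_lt]
  exact OrderIso.ordinalType_congr
    { toFun := fun y => ⟨y.1.1, y.1.2, y.2⟩
      invFun := fun y => ⟨⟨y.1, y.2.1⟩, y.2.2⟩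
      left_inv := fun _ => rfl
      right_inv := fun _ => rfl
      map_rel_iff' := Iff.rfl }

theorem typeLT_inter_Iio_lt {s : Set α} {x : α} (hx : x ∈ s) :
    typeLT ↥(s ∩ Iio x) < typeLT s :=
  typein_mk_eq_typeLT_inter_Iio hx ▸ typein_lt_type _ _

theorem typeLT_le_of_forall_typeLT_inter_Iio_lt {s : Set α} {o : Ordinal.{u}}
    (h : ∀ x ∈ s, typeLT ↥(s ∩ Iio x) < o) : typeLT s ≤ o := by
  by_contra! ho
  obtain ⟨⟨x, hx⟩, hxo⟩ := typein_surj ((· < ·) : s → s → Prop) ho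
  exact (h x hx).ne (typein_mk_eq_typeLT_inter_Iio hx ▸ hxo)

theorem typeLT_union_le {s t : Set α} (h : ∀ x ∈ s, ∀ y ∈ t, x < y) :
    typeLT ↥(s ∪ t) ≤ typeLT s + typeLT t := by
  classical
  rw [← type_sum_lex]
  refine (RelEmbedding.ofMonotone (fun x : ↥(s ∪ t) =>
    if hx : x.1 ∈ s then Sum.inl ⟨x.1, hx⟩ else Sum.inr ⟨x.1, x.2.resolve_left hx⟩)
    ?_).ordinal_type_le
  rintro ⟨x, hx⟩ ⟨y, hy⟩ (hxy : x < y)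
  dsimp only
  split_ifs with hxs hys hys
  · exact Sum.Lex.inl hxy
  · exact Sum.Lex.sep _ _
  · exact absurd (h y hys x (hx.resolve_left hxs)) hxy.not_gt
  · exact Sum.Lex.inr hxy

theorem typeLT_le_of_monotoneOn_of_typeLT_fiber_lt {ι : Type u} [LinearOrder ι] [WellFoundedLT ι]
    {s : Set α} {c : α → ι} {e : Ordinal.{u}} (he : IsPrincipal (· + ·) e) (hc : MonotoneOn c s)
    (hfiber : ∀ i, typeLT ↥(s ∩ c ⁻¹' {i}) < e) (hcof : ∀ x ∈ s, #(Iio (c x)) < e.cof) :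
    typeLT s ≤ e := by
  have hrank : ∀ x ∈ s, typeLT ↥(s ∩ Iio x) < typeLT ↥(s ∩ c ⁻¹' Iic (c x)) := by
    intro x hx
    have hsub : s ∩ Iio x ⊆ s ∩ c ⁻¹' Iic (c x) ∩ Iio x :=
      fun y hy => ⟨⟨hy.1, hc hy.1 hx hy.2.le⟩, hy.2⟩
    exact (type_mono hsub).trans_lt (typeLT_inter_Iio_lt ⟨hx, le_rfl⟩)
  have hIic : ∀ i, #(Iio i) < e.cof → typeLT ↥(s ∩ c ⁻¹' Iic i) < e := by
    intro i
    induction i using WellFoundedLT.induction with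
    | _ i IH =>
      intro hi
      -- the part of `s` of colour `< i` has type at most the supremum of the earlier parts,
      -- a supremum of fewer than `cof e` ordinals below `e`
      have hIio : typeLT ↥(s ∩ c ⁻¹' Iio i) < e := by
        let f := fun j : Iio i => typeLT ↥(s ∩ c ⁻¹' Iic j.1)
        have hf : ∀ j, f j < e := fun j =>
          IH j j.2 ((mk_le_mk_of_subset (Iio_subset_Iio j.2.le)).trans_lt hi)
        refine (typeLT_le_of_forall_typeLT_inter_Iio_lt fun x hx => ?_).trans_lt
          (iSup_lt_of_lt_cof hi hf)
        calc typeLT ↥(s ∩ c ⁻¹' Iio i ∩ Iio x) ≤ typeLT ↥(s ∩ Iio x) :=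
              type_mono fun y hy => ⟨hy.1.1, hy.2⟩
          _ < f ⟨c x, hx.2⟩ := hrank x hx.1
          _ ≤ ⨆ j, f j := Ordinal.le_iSup f _
      have hsplit : s ∩ c ⁻¹' Iic i = s ∩ c ⁻¹' Iio i ∪ s ∩ c ⁻¹' {i} := by
        rw [← inter_union_distrib_left, ← preimage_union, Iio_union_right]
      rw [hsplit]
      refine (typeLT_union_le ?_).trans_lt (he hIio (hfiber i))
      rintro x ⟨hx, hxi⟩ y ⟨hy, rfl⟩
      exact lt_of_not_ge fun hyx => (hc hy hx hyx).not_gt hxi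
  exact typeLT_le_of_forall_typeLT_inter_Iio_lt fun x hx =>
    (hrank x hx).trans (hIic _ (hcof x hx))

end OrderType

theorem typeLT_le_iff_nonempty_orderEmbedding {α β : Type u} [LinearOrder α] [WellFoundedLT α]
    [LinearOrder β] [WellFoundedLT β] : typeLT α ≤ typeLT β ↔ Nonempty (α ↪o β) :=
  type_le_iff'.trans
    ⟨fun ⟨f⟩ => ⟨RelEmbedding.orderEmbeddingOfLTEmbedding f⟩, fun ⟨f⟩ => ⟨f.ltEmbedding⟩⟩

theorem isPrincipal_add_lift {e : Ordinal.{u}} (he : IsPrincipal (· + ·) e) :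
    IsPrincipal (· + ·) (Ordinal.lift.{u + 1} e) := by
  intro a b ha hb
  obtain ⟨a, -, rfl⟩ := lt_lift_iff.1 ha
  obtain ⟨b, -, rfl⟩ := lt_lift_iff.1 hb
  simpa only [← Ordinal.lift_add, Ordinal.lift_lt] using he (lift_lt.1 ha) (lift_lt.1 hb)

theorem mem_copies_iff {a : Ordinal.{0}} {C : Set Ordinal.{0}} (hC : C ⊆ Iio a) :
    C ∈ Copies a ↔ Ordinal.lift.{1} a ≤ typeLT C := by
  rw [← type_lt_Iio, typeLT_le_iff_nonempty_orderEmbedding]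
  constructor
  · rintro ⟨f, rfl⟩
    exact ⟨OrderEmbedding.ofStrictMono (fun x => ⟨f x, f x, mem_range_self x, rfl⟩)
      fun _ _ h => f.strictMono h⟩
  · rintro ⟨f⟩
    have htype : typeLT (Iio a) = typeLT C :=
      (typeLT_le_iff_nonempty_orderEmbedding.2 ⟨f⟩).antisymm (type_mono hC)
    let φ : Iio a ≃o C := OrderIso.ofRelIsoLT (type_eq.1 htype).some
    refine ⟨φ.toOrderEmbedding.trans (OrderEmbedding.ofStrictMono (inclusion hC) fun _ _ h => h),
      ?_⟩
    ext x
    constructor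
    · intro hx
      exact ⟨⟨x, hC hx⟩, ⟨φ.symm ⟨x, hx⟩, by simp [OrderEmbedding.ofStrictMono]⟩, rfl⟩
    · rintro ⟨_, ⟨y, rfl⟩, rfl⟩
      exact (φ y).2

namespace Cardinal.IsRegular

variable {κ : Cardinal.{0}} {S : Set Ordinal.{0}}

theorem exists_forall_lt_of_mk_lt (hκ : κ.IsRegular) (hS : S ⊆ Iio κ.ord)
    (h : #S < Cardinal.lift.{1} κ) : ∃ γ < κ.ord, ∀ β ∈ S, β < γ := by
  have hsup : sSup S < κ.ord := by
    refine sSup_lt_of_lt_cof ?_ hS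
    rwa [← lift_cof, hκ.cof_ord]
  refine ⟨Order.succ (sSup S), (isSuccLimit_ord hκ.aleph0_le).succ_lt hsup, fun β hβ => ?_⟩
  exact Order.lt_succ_iff.2 (le_csSup ⟨κ.ord, fun _ h => (hS h).le⟩ hβ)

theorem mk_eq_lift_iff_forall_exists_le (hκ : κ.IsRegular) (hS : S ⊆ Iio κ.ord) :
    #S = Cardinal.lift.{1} κ ↔ ∀ γ < κ.ord, ∃ β ∈ S, γ ≤ β := by
  constructor
  · intro h γ hγ
    by_contra! hbound
    have hlt : #(Iio γ) < Cardinal.lift.{1} κ := by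
      rw [Cardinal.mk_Iio_ordinal, Cardinal.lift_lt]
      exact lt_ord.1 hγ
    exact ((mk_le_mk_of_subset hbound).trans_lt hlt).ne h
  · intro h
    have hle : #S ≤ Cardinal.lift.{1} κ := by
      simpa using mk_le_mk_of_subset hS
    refine hle.antisymm (not_lt.1 fun hlt => ?_)
    obtain ⟨γ, hγ, hbound⟩ := hκ.exists_forall_lt_of_mk_lt hS hlt
    obtain ⟨β, hβ, hγβ⟩ := h γ hγ
    exact (hbound β hβ).not_ge hγβ

end Cardinal.IsRegular

/-- Where no such `β` exists this is the junk value `sInf ∅ = 0`. -/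
noncomputable def increasingSelection (S : Ordinal.{0} → Set Ordinal.{0}) (α : Ordinal.{0}) :
    Ordinal.{0} :=
  sInf {β ∈ S α | ∀ α' < α, increasingSelection S α' < β}
termination_by α

theorem increasingSelection_spec {κ : Cardinal.{0}} (hκ : κ.IsRegular)
    {S : Ordinal.{0} → Set Ordinal.{0}} (hS : ∀ α < κ.ord, S α ⊆ Iio κ.ord)
    (hcofinal : ∀ α < κ.ord, ∀ γ < κ.ord, ∃ β ∈ S α, γ ≤ β) :
    ∀ α < κ.ord, increasingSelection S α ∈ S α ∧
      ∀ α' < α, increasingSelection S α' < increasingSelection S α := by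
  intro α
  induction α using WellFoundedLT.induction with
  | _ α IH =>
    intro hα
    have hsub : increasingSelection S '' Iio α ⊆ Iio κ.ord := by
      rintro _ ⟨α', h, rfl⟩
      exact hS α' (h.trans hα) (IH α' h (h.trans hα)).1
    have hsmall : #(increasingSelection S '' Iio α) < Cardinal.lift.{1} κ := by
      refine mk_image_le.trans_lt ?_
      rw [Cardinal.mk_Iio_ordinal, Cardinal.lift_lt]
      exact lt_ord.1 hα
    obtain ⟨γ, hγ, hbound⟩ := hκ.exists_forall_lt_of_mk_lt hsub hsmall
    obtain ⟨β, hβ, hγβ⟩ := hcofinal α hα γ hγ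
    have hmem := csInf_mem (s := {β ∈ S α | ∀ α' < α, increasingSelection S α' < β})
      ⟨β, hβ, fun α' h => (hbound _ (mem_image_of_mem _ h)).trans_le hγβ⟩
    rwa [increasingSelection]

theorem nonempty_orderEmbedding_iUnion {ι α β : Type*} [LinearOrder ι] [LinearOrder α]
    [Preorder β] {L : ι → Set α} {M : ι → Set β}
    (hL : ∀ i j, i < j → ∀ x ∈ L i, ∀ y ∈ L j, x < y)
    (hM : ∀ i j, i < j → ∀ x ∈ M i, ∀ y ∈ M j, x < y) (f : ∀ i, L i ↪o M i) :
    Nonempty (↥(⋃ i, L i) ↪o ↥(⋃ i, M i)) := by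
  have hf : ∀ i j (x : L i) (y : L j), x.1 < y.1 → (f i x).1 < (f j y).1 := by
    intro i j x y hxy
    rcases lt_trichotomy i j with h | rfl | h
    · exact hM i j h _ (f i x).2 _ (f j y).2
    · exact (f i).strictMono hxy
    · exact absurd (hL j i h _ y.2 _ x.2) hxy.not_gt
  choose idx hidx using fun x : ↥(⋃ i, L i) => mem_iUnion.1 x.2
  exact ⟨OrderEmbedding.ofStrictMono
    (fun x => ⟨f (idx x) ⟨x, hidx x⟩, mem_iUnion.2 ⟨_, (f _ _).2⟩⟩) fun _ _ h => hf _ _ _ _ h⟩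

theorem nonempty_of_orderIso_Iio_opow {s : Set Ordinal.{0}} {d : Ordinal.{0}}
    (h : Nonempty (s ≃o Iio (ω ^ d))) : s.Nonempty :=
  let ⟨φ⟩ := h
  ⟨φ.symm ⟨0, opow_pos d omega0_pos⟩, (φ.symm _).2⟩

structure IsConsecutiveBlocks (θ a : Ordinal.{0}) (L : Ordinal.{0} → Set Ordinal.{0}) : Prop where
  lt_of_lt : ∀ α < θ, ∀ β < θ, α < β → ∀ x ∈ L α, ∀ y ∈ L β, x < y
  biUnion_eq : ⋃ α ∈ Iio θ, L α = Iio a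

/-- `embeddingIndices κ.ord L C (ω ^ δ_α)` is the paper's `S^α_C`. -/
def embeddingIndices (θ : Ordinal.{0}) (L : Ordinal.{0} → Set Ordinal.{0}) (C : Set Ordinal.{0})
    (e : Ordinal.{0}) : Set Ordinal.{0} :=
  {β | β < θ ∧ Nonempty (Iio e ↪o ↥(L β ∩ C))}

namespace IsConsecutiveBlocks

variable {θ a : Ordinal.{0}} {L : Ordinal.{0} → Set Ordinal.{0}}

theorem exists_mem (hB : IsConsecutiveBlocks θ a L) {x : Ordinal} (hx : x < a) :
    ∃ α < θ, x ∈ L α := by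
  have hx' : x ∈ ⋃ α ∈ Iio θ, L α := hB.biUnion_eq ▸ hx
  simpa using hx'

theorem subset_Iio (hB : IsConsecutiveBlocks θ a L) {α : Ordinal} (hα : α < θ) : L α ⊆ Iio a :=
  hB.biUnion_eq ▸ subset_biUnion_of_mem (u := L) hα

theorem le_of_le (hB : IsConsecutiveBlocks θ a L) {α β x y : Ordinal} (hα : α < θ) (hβ : β < θ)
    (hx : x ∈ L α) (hy : y ∈ L β) (hxy : x ≤ y) : α ≤ β :=
  not_lt.1 fun h => (hB.lt_of_lt β hβ α hα h y hy x hx).not_ge hxy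

theorem opow_lt (hB : IsConsecutiveBlocks θ a L) (hθ : Order.IsSuccLimit θ)
    {d : Ordinal → Ordinal} (hiso : ∀ α < θ, Nonempty (L α ≃o Iio (ω ^ d α))) {α : Ordinal}
    (hα : α < θ) : ω ^ d α < a := by
  have hsucc : Order.succ α < θ := hθ.succ_lt hα
  obtain ⟨x, hx⟩ := nonempty_of_orderIso_Iio_opow (hiso _ hsucc)
  have hsub : L α ⊆ Iio x := fun y hy => hB.lt_of_lt α hα _ hsucc (Order.lt_succ α) y hy x hx
  obtain ⟨φ⟩ := hiso α hα
  have : Ordinal.lift.{1} (ω ^ d α) ≤ Ordinal.lift.{1} x := by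
    rw [← type_lt_Iio, ← type_lt_Iio, ← φ.ordinalType_congr]
    exact type_mono hsub
  exact (lift_le.1 this).trans_lt (hB.subset_Iio hsucc hx)

theorem typeLT_diff_Iio_le {κ : Cardinal.{0}} (hB : IsConsecutiveBlocks κ.ord a L)
    {C : Set Ordinal.{0}} (hC : C ⊆ Iio a) {e : Ordinal.{0}} (he : IsPrincipal (· + ·) e)
    (he0 : 0 < e) (hcof : κ ≤ e.cof) {γ b : Ordinal.{0}} (hγ : γ < κ.ord) (hb : b ∈ L γ)
    (hbound : ∀ β ∈ embeddingIndices κ.ord L C e, β < γ) :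
    typeLT ↥(C \ Iio b) ≤ Ordinal.lift.{1} e := by
  choose! c hc using fun x (hx : x < a) => hB.exists_mem hx
  refine typeLT_le_of_monotoneOn_of_typeLT_fiber_lt (c := c) (isPrincipal_add_lift he)
    (fun x hx y hy hxy => hB.le_of_le (hc x (hC hx.1)).1 (hc y (hC hy.1)).1 (hc x (hC hx.1)).2
      (hc y (hC hy.1)).2 hxy) (fun β => ?_) fun x hx => ?_
  · rcases eq_empty_or_nonempty (C \ Iio b ∩ c ⁻¹' {β}) with h | ⟨x, ⟨hxC, hxb⟩, rfl⟩
    · rw [h, type_eq_zero_of_empty]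
      simpa only [Ordinal.lift_zero] using Ordinal.lift_lt.{1}.2 he0
    have hcx := hc x (hC hxC)
    have hγx : γ ≤ c x := hB.le_of_le hγ hcx.1 hb hcx.2 (not_lt.1 hxb)
    have hblock : typeLT ↥(L (c x) ∩ C) < Ordinal.lift.{1} e := by
      by_contra! h
      rw [← type_lt_Iio, typeLT_le_iff_nonempty_orderEmbedding] at h
      exact (hbound _ ⟨hcx.1, h⟩).not_ge hγx
    refine (type_mono ?_).trans_lt hblock
    rintro y ⟨⟨hyC, -⟩, hy⟩
    exact ⟨hy ▸ (hc y (hC hyC)).2, hyC⟩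
  · rw [Cardinal.mk_Iio_ordinal, ← lift_cof]
    exact Cardinal.lift_lt.2 ((lt_ord.1 (hc x (hC hx.1)).1).trans_le hcof)

theorem forall_cofinal_of_lift_le_typeLT {κ : Cardinal.{0}} (hκ : κ.IsRegular)
    (ha : IsPrincipal (· + ·) a) (hB : IsConsecutiveBlocks κ.ord a L)
    {d : Ordinal.{0} → Ordinal.{0}}
    (hiso : ∀ α < κ.ord, Nonempty (L α ≃o Iio (ω ^ d α)))
    (hcof : ∀ α < κ.ord, κ ≤ (ω ^ d α).cof) {C : Set Ordinal.{0}} (hC : C ⊆ Iio a)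
    (hCtype : Ordinal.lift.{1} a ≤ typeLT C) :
    ∀ α < κ.ord, ∀ γ < κ.ord, ∃ β ∈ embeddingIndices κ.ord L C (ω ^ d α), γ ≤ β := by
  intro α hα γ hγ
  by_contra! hbound
  obtain ⟨b, hb⟩ := nonempty_of_orderIso_Iio_opow (hiso γ hγ)
  have hhead : typeLT ↥(C ∩ Iio b) ≤ Ordinal.lift.{1} b :=
    (type_mono inter_subset_right).trans_eq (type_lt_Iio b)
  have htail := hB.typeLT_diff_Iio_le hC (isPrincipal_add_omega0_opow _) (opow_pos _ omega0_pos)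
    (hcof α hα) hγ hb hbound
  have hsplit : Ordinal.lift.{1} a ≤ Ordinal.lift.{1} (b + ω ^ d α) := calc
    Ordinal.lift.{1} a ≤ typeLT C := hCtype
    _ = typeLT ↥(C ∩ Iio b ∪ C \ Iio b) := by rw [inter_union_sdiff]
    _ ≤ typeLT ↥(C ∩ Iio b) + typeLT ↥(C \ Iio b) :=
      typeLT_union_le fun x hx y hy => hx.2.trans_le (not_lt.1 hy.2)
    _ ≤ Ordinal.lift.{1} b + Ordinal.lift.{1} (ω ^ d α) := add_le_add hhead htail
    _ = Ordinal.lift.{1} (b + ω ^ d α) := (Ordinal.lift_add _ _).symm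
  exact (ha (hB.subset_Iio hγ hb) (hB.opow_lt (isSuccLimit_ord hκ.aleph0_le) hiso hα)).not_ge
    (Ordinal.lift_le.1 hsplit)

theorem lift_le_typeLT_of_forall_cofinal {κ : Cardinal.{0}} (hκ : κ.IsRegular)
    (hB : IsConsecutiveBlocks κ.ord a L) {e : Ordinal.{0} → Ordinal.{0}}
    (hiso : ∀ α < κ.ord, Nonempty (L α ≃o Iio (e α))) {C : Set Ordinal.{0}}
    (hS : ∀ α < κ.ord, ∀ γ < κ.ord, ∃ β ∈ embeddingIndices κ.ord L C (e α), γ ≤ β) :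
    Ordinal.lift.{1} a ≤ typeLT C := by
  let g := increasingSelection fun α => embeddingIndices κ.ord L C (e α)
  have hg := increasingSelection_spec hκ (fun _ _ _ hβ => hβ.1) hS
  have hemb : ∀ i : Iio κ.ord, Nonempty (L i ↪o ↥(L (g i) ∩ C)) := fun i =>
    let ⟨φ⟩ := hiso i i.2
    let ⟨ψ⟩ := (hg i i.2).1.2
    ⟨φ.toOrderEmbedding.trans ψ⟩
  obtain ⟨F⟩ := nonempty_orderEmbedding_iUnion (M := fun i : Iio κ.ord => L (g i) ∩ C)
    (fun i j h => hB.lt_of_lt i i.2 j j.2 h)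
    (fun i j h x hx y hy => hB.lt_of_lt _ (hg i i.2).1.1 _ (hg j j.2).1.1 ((hg j j.2).2 i h)
      x hx.1 y hy.1)
    fun i => (hemb i).some
  have hdom : ⋃ i : Iio κ.ord, L i = Iio a := by
    rw [← hB.biUnion_eq, biUnion_eq_iUnion]
  calc Ordinal.lift.{1} a = typeLT (Iio a) := (type_lt_Iio a).symm
    _ = typeLT ↥(⋃ i : Iio κ.ord, L i) := by rw [hdom]
    _ ≤ typeLT ↥(⋃ i : Iio κ.ord, L (g i) ∩ C) := F.ltEmbedding.ordinal_type_le
    _ ≤ typeLT C := type_mono (iUnion_subset fun _ => inter_subset_right)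

end IsConsecutiveBlocks

theorem stmt12_general (δ : Ordinal.{0}) (hδ : 0 < δ) (κc : Cardinal.{0})
    (hκ : (ω ^ δ).cof = κc)
    (δf : Ordinal → Ordinal)
    (hcof : ∀ α < κc.ord, κc ≤ (ω ^ δf α).cof)
    (Lset : Ordinal → Set Ordinal)
    (hconv : ∀ α < κc.ord, ∀ β < κc.ord, α < β →
      ∀ x ∈ Lset α, ∀ y ∈ Lset β, x < y)
    (hiso : ∀ α < κc.ord, Nonempty (↥(Lset α) ≃o ↥(Set.Iio (ω ^ δf α))))
    (hunion : ⋃ α ∈ Set.Iio κc.ord, Lset α = Set.Iio (ω ^ δ))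
    (C : Set Ordinal) (hCsub : C ⊆ Set.Iio (ω ^ δ)) :
    C ∈ Copies (ω ^ δ) ↔
      ∀ α < κc.ord,
        Cardinal.mk ↥{β : Ordinal | β < κc.ord ∧
          Nonempty (↥(Set.Iio (ω ^ δf α)) ↪o ↥(Lset β ∩ C))} =
        Cardinal.lift.{1} κc := by
  have hreg : κc.IsRegular :=
    hκ ▸ isRegular_cof (isSuccLimit_opow_left isSuccLimit_omega0 hδ.ne')
  have hB : IsConsecutiveBlocks κc.ord (ω ^ δ) Lset := ⟨hconv, hunion⟩
  have hcard : ∀ α < κc.ord,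
      #(embeddingIndices κc.ord Lset C (ω ^ δf α)) = Cardinal.lift.{1} κc ↔
        ∀ γ < κc.ord, ∃ β ∈ embeddingIndices κc.ord Lset C (ω ^ δf α), γ ≤ β :=
    fun _ _ => hreg.mk_eq_lift_iff_forall_exists_le fun _ hβ => hβ.1
  rw [mem_copies_iff hCsub]
  constructor
  · intro hC α hα
    exact (hcard α hα).2 (hB.forall_cofinal_of_lift_le_typeLT hreg
      (isPrincipal_add_omega0_opow δ) hiso hcof hCsub hC α hα)
  · exact fun h => hB.lift_le_typeLT_of_forall_cofinal hreg hiso fun α hα => (hcard α hα).1 (h α hα)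

/-- Setting: `κ = cf(ω^δ)`, `⟨δ_α : α<κ⟩` a nondecreasing sequence of nonzero
ordinals with `Σ_{α<κ} ω^{δ_α} = ω^δ`, realized by a partition of `[0, ω^δ)` into
consecutive intervals `L_α` of order type `ω^{δ_α}`, and moreover
`cf(ω^{δ_α}) ≥ κ` for all `α < κ`. Then `C ⊆ L` is a copy of `L` iff for every
`α < κ` the set `S^α_C = {β < κ : ω^{δ_α} embeds into L_β ∩ C}` has cardinality
`κ`. -/
theorem stmt12 (δ : Ordinal.{0}) (hδ : 0 < δ) (κc : Cardinal.{0})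
    (hκ : (ω ^ δ).cof = κc)
    (δf : Ordinal → Ordinal)
    (hpos : ∀ α < κc.ord, 0 < δf α)
    (hmono : ∀ α β : Ordinal, α ≤ β → β < κc.ord → δf α ≤ δf β)
    (hcof : ∀ α < κc.ord, κc ≤ (ω ^ δf α).cof)
    (Lset : Ordinal → Set Ordinal)
    (hconv : ∀ α < κc.ord, ∀ β < κc.ord, α < β →
      ∀ x ∈ Lset α, ∀ y ∈ Lset β, x < y)
    (hiso : ∀ α < κc.ord, Nonempty (↥(Lset α) ≃o ↥(Set.Iio (ω ^ δf α))))
    (hunion : ⋃ α ∈ Set.Iio κc.ord, Lset α = Set.Iio (ω ^ δ))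
    (C : Set Ordinal) (hCsub : C ⊆ Set.Iio (ω ^ δ)) :
    C ∈ Copies (ω ^ δ) ↔
      ∀ α < κc.ord,
        Cardinal.mk ↥{β : Ordinal | β < κc.ord ∧
          Nonempty (↥(Set.Iio (ω ^ δf α)) ↪o ↥(Lset β ∩ C))} =
        Cardinal.lift.{1} κc :=
  stmt12_general δ hδ κc hκ δf hcof Lset hconv hiso hunion C hCsub
end

section
/- If δ > 0 is a successor ordinal or cf(δ) = ω, then the preorder ⟨P(ω^δ), ⊆_I⟩ is σ-closed: for every sequence ⟨A_n : n < ω⟩ of copies of ω^δ with A_{n+1} ⊆_I A_n for all n < ω, there is a copy A of ω^δ such that A ⊆_I A_n for all n < ω. -/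
open Ordinal Set Cardinal

/-- `A ⊆_I B` : `A ∖ B ∈ I_{ω^δ}`, i.e. `ω^δ` does not order-embed into `A ∖ B`. -/
def leI (a : Ordinal.{0}) (A B : Set Ordinal.{0}) : Prop :=
  ¬ Nonempty (↥(Set.Iio a) ↪o ↥(A \ B))

/-!
Every two-colouring of `ω ^ δ` has a colour class of order type `ω ^ δ`: by induction on `δ`, split
`ω ^ (β + 1) = ω ^ β * ω` into `ω` blocks of type `ω ^ β`, one colour wins infinitely many blocks;
at a limit `δ`, `ω ^ δ` is the supremum of the smaller powers. So the subsets of `ω ^ δ` of order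
type `< ω ^ δ` form an ideal, and the intersections `A 0 ∩ ⋯ ∩ A n` still have type `ω ^ δ`.
As `cf (ω ^ δ) = ω`, there are a cofinal sequence `s n` and points `t 0 < t 1 < ⋯ < ω ^ δ` such that
`[t n, t (n + 1))` meets `A 0 ∩ ⋯ ∩ A n` in order type at least `s n`. The union `B` of these pieces
has type `ω ^ δ`, and `B ∖ A n ⊆ [0, t n)` is bounded, hence small.
-/

universe u

theorem add_typeLT_le_typeLT_union {α : Type u} [LinearOrder α] [WellFoundedLT α]
    {S T : Set α} (h : ∀ s ∈ S, ∀ t ∈ T, s < t) :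
    typeLT S + typeLT T ≤ typeLT ↥(S ∪ T) := by
  rw [← type_sum_lex]
  refine (RelEmbedding.ofMonotone (Sum.elim (inclusion subset_union_left)
    (inclusion subset_union_right)) ?_).ordinal_type_le
  rintro _ _ (⟨hlt⟩ | ⟨hlt⟩ | ⟨s, t⟩)
  · exact hlt
  · exact hlt
  · exact h s s.2 t t.2

theorem lift_le_typeLT_iff_nonempty {a : Ordinal.{u}} {S : Set Ordinal.{u}} :
    lift.{u + 1} a ≤ typeLT S ↔ Nonempty (Iio a ↪o S) := by
  rw [← type_lt_Iio, type_le_iff']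
  exact ⟨fun ⟨f⟩ => ⟨.orderEmbeddingOfLTEmbedding f⟩, fun ⟨f⟩ => ⟨f.ltEmbedding⟩⟩

theorem typeLT_inter_Iio_preimage_add_le (b c : Ordinal.{u}) (Z : Set Ordinal.{u}) :
    typeLT ↥(Iio c ∩ (b + ·) ⁻¹' Z) ≤ typeLT ↥(Z ∩ Ico b (b + c)) :=
  (OrderEmbedding.ofStrictMono
    (fun x : ↥(Iio c ∩ (b + ·) ⁻¹' Z) =>
      (⟨b + x, x.2.2, le_self_add, add_lt_add_right x.2.1 b⟩ : ↥(Z ∩ Ico b (b + c))))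
    fun _ _ h => add_lt_add_right (Subtype.coe_lt_coe.2 h) b).ltEmbedding.ordinal_type_le

theorem typeLT_preimage_le {a : Ordinal.{u}} {S : Set Ordinal.{u}} (f : Iio a ↪o S)
    (Z : Set Ordinal.{u}) : typeLT ↥{x | ∃ hx : x < a, (f ⟨x, hx⟩ : Ordinal) ∈ Z} ≤ typeLT Z :=
  (OrderEmbedding.ofStrictMono
    (fun x : ↥{x | ∃ hx : x < a, (f ⟨x, hx⟩ : Ordinal) ∈ Z} => (⟨f ⟨x, x.2.1⟩, x.2.2⟩ : Z))
    fun _ _ h => f.strictMono h).ltEmbedding.ordinal_type_le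

/-- The partition relation `a → (a)¹₂`. -/
def IsPartitionRegular (a : Ordinal.{u}) : Prop :=
  ∀ X Y : Set Ordinal.{u}, Iio a ⊆ X ∪ Y → lift.{u + 1} a ≤ typeLT X ∨ lift.{u + 1} a ≤ typeLT Y

theorem isPartitionRegular_one : IsPartitionRegular 1 := by
  intro X Y h
  simp only [Ordinal.lift_one, Order.one_le_iff_ne_zero, type_ne_zero_iff_nonempty,
    nonempty_subtype]
  exact (h (show (0 : Ordinal) < 1 from zero_lt_one)).imp (⟨0, ·⟩) (⟨0, ·⟩)

def bigBlocks (c : Ordinal.{u}) (Z : Set Ordinal.{u}) : Set ℕ :=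
  {n | lift.{u + 1} c ≤ typeLT ↥(Z ∩ Ico (c * n) (c * n + c))}

theorem lift_mul_le_typeLT_inter_Iio {c : Ordinal.{u}} {Z : Set Ordinal.{u}} {n : ℕ → ℕ}
    (hn : StrictMono n) (hZ : ∀ k, n k ∈ bigBlocks c Z) :
    ∀ k : ℕ, lift.{u + 1} c * k ≤ typeLT ↥(Z ∩ Iio (c * n k))
  | 0 => by simp
  | k + 1 => by
    have hblock_le : c * n k + c ≤ c * n (k + 1) := by
      rw [← mul_add_one]
      exact mul_le_mul_right (by exact_mod_cast hn k.lt_succ_self) c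
    calc lift.{u + 1} c * (k + 1 : ℕ) = lift.{u + 1} c * k + lift.{u + 1} c := by
          push_cast; rw [mul_add_one]
      _ ≤ typeLT ↥(Z ∩ Iio (c * n k)) + typeLT ↥(Z ∩ Ico (c * n k) (c * n k + c)) :=
          add_le_add (lift_mul_le_typeLT_inter_Iio hn hZ k) (hZ k)
      _ ≤ typeLT ↥(Z ∩ Iio (c * n k) ∪ Z ∩ Ico (c * n k) (c * n k + c)) :=
          add_typeLT_le_typeLT_union fun _ hx _ hy => hx.2.trans_le hy.2.1
      _ ≤ typeLT ↥(Z ∩ Iio (c * n (k + 1))) := by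
          refine type_mono (union_subset ?_ ?_) <;> refine inter_subset_inter_right Z ?_
          · exact Iio_subset_Iio (le_self_add.trans hblock_le)
          · exact fun x hx => hx.2.trans_le hblock_le

theorem lift_mul_omega0_le_typeLT_of_infinite {c : Ordinal.{u}} {Z : Set Ordinal.{u}}
    (h : (bigBlocks c Z).Infinite) : lift.{u + 1} (c * ω) ≤ typeLT Z := by
  rw [Ordinal.lift_mul, lift_omega0, mul_le_iff_of_isSuccLimit isSuccLimit_omega0]
  intro m hm
  obtain ⟨k, rfl⟩ := lt_omega0.1 hm
  exact (lift_mul_le_typeLT_inter_Iio (Nat.nth_strictMono h) (Nat.nth_mem_of_infinite h) k).trans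
    (type_mono inter_subset_left)

theorem IsPartitionRegular.mul_omega0 {c : Ordinal.{u}} (hc : IsPartitionRegular c) :
    IsPartitionRegular (c * ω) := by
  intro X Y hXY
  have hblocks (n : ℕ) : n ∈ bigBlocks c X ∨ n ∈ bigBlocks c Y := by
    have hcover : Iio c ⊆ (Iio c ∩ (c * n + ·) ⁻¹' X) ∪ (Iio c ∩ (c * n + ·) ⁻¹' Y) := by
      intro x hx
      have : c * n + x < c * ω := calc
        c * n + x < c * (n + 1) := by rw [mul_add_one]; exact add_lt_add_right hx _
        _ ≤ c * ω := mul_le_mul_right (by exact_mod_cast (natCast_lt_omega0 (n + 1)).le) c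
      exact (hXY this).imp (⟨hx, ·⟩) (⟨hx, ·⟩)
    exact (hc _ _ hcover).imp (·.trans (typeLT_inter_Iio_preimage_add_le _ _ _))
      (·.trans (typeLT_inter_Iio_preimage_add_le _ _ _))
  have : (bigBlocks c X ∪ bigBlocks c Y).Infinite :=
    infinite_univ.mono fun n _ => hblocks n
  exact (infinite_union.1 this).imp lift_mul_omega0_le_typeLT_of_infinite
    lift_mul_omega0_le_typeLT_of_infinite

theorem isPartitionRegular_of_forall_lt {a : Ordinal.{u}}
    (h : ∀ x < a, ∃ b, x < b ∧ b ≤ a ∧ IsPartitionRegular b) : IsPartitionRegular a := by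
  intro X Y hXY
  by_contra! hsmall
  obtain ⟨x, hxa, hx⟩ := lt_lift_iff.1 hsmall.1
  obtain ⟨y, hya, hy⟩ := lt_lift_iff.1 hsmall.2
  obtain ⟨b, hb, hba, hreg⟩ := h (max x y) (max_lt hxa hya)
  rcases hreg X Y ((Iio_subset_Iio hba).trans hXY) with hX | hY
  · exact hX.not_gt (hx ▸ lift_lt.2 (le_max_left x y |>.trans_lt hb))
  · exact hY.not_gt (hy ▸ lift_lt.2 (le_max_right x y |>.trans_lt hb))

theorem isPartitionRegular_omega0_opow (δ : Ordinal.{u}) : IsPartitionRegular (ω ^ δ) := by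
  induction δ using Ordinal.limitRecOn with
  | zero => simpa using isPartitionRegular_one
  | add_one β ih => simpa [opow_add_one] using ih.mul_omega0
  | limit δ hδ ih =>
    refine isPartitionRegular_of_forall_lt fun x hx => ?_
    obtain ⟨γ, hγ, hxγ⟩ := (lt_opow_of_isSuccLimit omega0_ne_zero hδ).1 hx
    exact ⟨ω ^ γ, hxγ, opow_le_opow_right omega0_pos hγ.le, ih γ hγ⟩

theorem IsPartitionRegular.le_typeLT_or {a : Ordinal.{u}} (ha : IsPartitionRegular a)
    {X Y : Set Ordinal.{u}} (h : lift.{u + 1} a ≤ typeLT ↥(X ∪ Y)) :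
    lift.{u + 1} a ≤ typeLT X ∨ lift.{u + 1} a ≤ typeLT Y := by
  obtain ⟨f⟩ := lift_le_typeLT_iff_nonempty.1 h
  have hcover : Iio a ⊆ {x | ∃ hx : x < a, (f ⟨x, hx⟩ : Ordinal) ∈ X} ∪
      {x | ∃ hx : x < a, (f ⟨x, hx⟩ : Ordinal) ∈ Y} :=
    fun x hx => (f ⟨x, hx⟩).2.imp (⟨hx, ·⟩) (⟨hx, ·⟩)
  exact (ha _ _ hcover).imp (·.trans (typeLT_preimage_le f X)) (·.trans (typeLT_preimage_le f Y))

theorem IsPartitionRegular.lift_le_typeLT_inter_Ioi {a : Ordinal.{u}} (ha : IsPartitionRegular a)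
    (hlim : Order.IsSuccLimit a) {S : Set Ordinal.{u}} (hS : lift.{u + 1} a ≤ typeLT S)
    {ξ : Ordinal.{u}} (hξ : ξ < a) : lift.{u + 1} a ≤ typeLT ↥(S ∩ Ioi ξ) := by
  have hsplit : S ⊆ S ∩ Iio (ξ + 1) ∪ S ∩ Ioi ξ := fun x hx =>
    (lt_or_ge ξ x).symm.imp (fun h => ⟨hx, Order.lt_add_one_iff.2 h⟩) (⟨hx, ·⟩)
  refine (ha.le_typeLT_or (hS.trans (type_mono hsplit))).resolve_left fun h => ?_
  have : typeLT ↥(S ∩ Iio (ξ + 1)) < lift.{u + 1} a := by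
    refine (type_mono inter_subset_right).trans_lt ?_
    rw [type_lt_Iio, Ordinal.lift_lt]
    exact hlim.add_one_lt hξ
  exact h.not_gt this

theorem IsPartitionRegular.typeLT_diff_dissipate_lt {a : Ordinal.{u}} (ha : IsPartitionRegular a)
    {A : ℕ → Set Ordinal.{u}}
    (hA : ∀ n, typeLT ↥(A (n + 1) \ A n) < lift.{u + 1} a) (hpos : 0 < a) :
    ∀ n, typeLT ↥(A n \ dissipate A n) < lift.{u + 1} a
  | 0 => by
    rw [dissipate_zero_nat, sdiff_self, type_eq_zero_of_empty]
    simpa using Ordinal.lift_lt.{u + 1}.2 hpos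
  | n + 1 => by
    have hsub : A (n + 1) \ dissipate A (n + 1) ⊆ (A (n + 1) \ A n) ∪ (A n \ dissipate A n) := by
      rw [dissipate_succ]
      intro x hx
      by_cases hxn : x ∈ A n
      · exact Or.inr ⟨hxn, fun h => hx.2 ⟨h, hx.1⟩⟩
      · exact Or.inl ⟨hx.1, hxn⟩
    refine (type_mono hsub).trans_lt (lt_of_not_ge fun h => ?_)
    rcases ha.le_typeLT_or h with h | h
    · exact h.not_gt (hA n)
    · exact h.not_gt (ha.typeLT_diff_dissipate_lt hA hpos n)

theorem IsPartitionRegular.lift_le_typeLT_dissipate {a : Ordinal.{u}} (ha : IsPartitionRegular a)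
    {A : ℕ → Set Ordinal.{u}} (hbig : ∀ n, lift.{u + 1} a ≤ typeLT (A n))
    (hA : ∀ n, typeLT ↥(A (n + 1) \ A n) < lift.{u + 1} a) (hpos : 0 < a) (n : ℕ) :
    lift.{u + 1} a ≤ typeLT (dissipate A n) := by
  have hsplit : A n ⊆ dissipate A n ∪ (A n \ dissipate A n) := fun x hx => by
    by_cases h : x ∈ dissipate A n
    · exact Or.inl h
    · exact Or.inr ⟨hx, h⟩
  exact (ha.le_typeLT_or ((hbig n).trans (type_mono hsplit))).resolve_right
    (ha.typeLT_diff_dissipate_lt hA hpos n).not_ge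

theorem cof_omega0_opow_eq_aleph0 {δ : Ordinal.{u}} (h : (∃ β, δ = β + 1) ∨ δ.cof = ℵ₀) :
    (ω ^ δ).cof = ℵ₀ := by
  rcases h with ⟨β, rfl⟩ | h
  · rw [opow_add_one, cof_mul (opow_ne_zero β omega0_ne_zero) isSuccLimit_omega0.isSuccPrelimit,
      cof_omega0]
  · exact (cof_map_of_isNormal (isNormal_opow one_lt_omega0)
      (one_lt_cof_iff.1 (h ▸ one_lt_aleph0))).trans h

theorem exists_seq_forall_lt_exists_lt_of_cof_eq_aleph0 {a : Ordinal.{u}} (h : a.cof = ℵ₀) :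
    ∃ s : ℕ → Ordinal.{u}, (∀ n, s n < a) ∧ ∀ x < a, ∃ n, x < s n := by
  obtain ⟨f, hf⟩ := exists_isFundamentalSeq (a := ω) (o := a) (by rw [h, ord_aleph0])
  have hlim : Order.IsSuccLimit a := one_lt_cof_iff.1 (h ▸ one_lt_aleph0)
  refine ⟨fun n => f ⟨n, natCast_lt_omega0 n⟩, fun n => (f _).2, fun x hx => ?_⟩
  obtain ⟨_, ⟨⟨i, hi⟩, rfl⟩, hxi⟩ := hf.isCofinal_range ⟨x + 1, hlim.add_one_lt hx⟩
  obtain ⟨n, rfl⟩ := lt_omega0.1 hi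
  exact ⟨n, (Order.lt_add_one_iff.2 le_rfl).trans_le hxi⟩

theorem IsPartitionRegular.exists_lift_le_typeLT_inter_Ico {a : Ordinal.{u}}
    (ha : IsPartitionRegular a) (hlim : Order.IsSuccLimit a) {S : Set Ordinal.{u}}
    (hSa : S ⊆ Iio a) (hS : lift.{u + 1} a ≤ typeLT S) {ξ x : Ordinal.{u}} (hξ : ξ < a)
    (hx : x < a) : ∃ t, ξ < t ∧ t < a ∧ lift.{u + 1} x ≤ typeLT ↥(S ∩ Ico ξ t) := by
  obtain ⟨g⟩ := lift_le_typeLT_iff_nonempty.1 (ha.lift_le_typeLT_inter_Ioi hlim hS hξ)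
  refine ⟨g ⟨x, hx⟩, (g ⟨x, hx⟩).2.2, hSa (g ⟨x, hx⟩).2.1, lift_le_typeLT_iff_nonempty.2 ⟨?_⟩⟩
  have hg_lt (y : Iio x) : (g ⟨y, y.2.trans hx⟩ : Ordinal) < g ⟨x, hx⟩ :=
    g.strictMono (show (⟨y, _⟩ : Iio a) < ⟨x, hx⟩ from y.2)
  exact OrderEmbedding.ofStrictMono
    (fun y => ⟨g ⟨y, y.2.trans hx⟩, (g _).2.1, (g _).2.2.le, hg_lt y⟩) fun _ _ h => g.strictMono h

theorem IsPartitionRegular.exists_lift_le_typeLT_diff_subset_Iio {a : Ordinal.{u}}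
    (ha : IsPartitionRegular a) (hcof : a.cof = ℵ₀) {C : ℕ → Set Ordinal.{u}} (hC : Antitone C)
    (hCa : ∀ n, C n ⊆ Iio a) (hbig : ∀ n, lift.{u + 1} a ≤ typeLT (C n)) :
    ∃ B ⊆ Iio a, lift.{u + 1} a ≤ typeLT B ∧ ∀ n, ∃ ξ < a, B \ C n ⊆ Iio ξ := by
  have hlim : Order.IsSuccLimit a := one_lt_cof_iff.1 (hcof ▸ one_lt_aleph0)
  obtain ⟨s, hsa, hs⟩ := exists_seq_forall_lt_exists_lt_of_cof_eq_aleph0 hcof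
  have hnext (n : ℕ) (ξ : Iio a) :
      ∃ t : Iio a, ξ < t ∧ lift.{u + 1} (s n) ≤ typeLT ↥(C n ∩ Ico ξ.1 t.1) := by
    obtain ⟨t, hξt, hta, ht⟩ := ha.exists_lift_le_typeLT_inter_Ico hlim (hCa n) (hbig n) ξ.2 (hsa n)
    exact ⟨⟨t, hta⟩, hξt, ht⟩
  choose next hnext_gt hnext_le using hnext
  let t (n : ℕ) : Iio a := Nat.rec ⟨0, hlim.bot_lt⟩ next n
  have ht : Monotone t := monotone_nat_of_le_succ fun n => (hnext_gt n (t n)).le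
  refine ⟨⋃ n, C n ∩ Ico (t n).1 (t (n + 1)).1,
    iUnion_subset fun n => inter_subset_left.trans (hCa n), ?_, fun n => ?_⟩
  · refine le_of_forall_lt fun y hy => ?_
    obtain ⟨x, hxa, rfl⟩ := lt_lift_iff.1 hy
    obtain ⟨n, hn⟩ := hs x hxa
    exact (Ordinal.lift_lt.2 hn).trans_le ((hnext_le n (t n)).trans
      (type_mono (subset_iUnion (fun n => C n ∩ Ico (t n).1 (t (n + 1)).1) n)))
  · refine ⟨(t n).1, (t n).2, ?_⟩
    rintro y ⟨hyB, hyC⟩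
    obtain ⟨m, hyCm, -, hym⟩ := mem_iUnion.1 hyB
    rcases lt_or_ge m n with hmn | hnm
    · exact hym.trans_le (ht hmn)
    · exact absurd (hC hnm hyCm) hyC

theorem subset_Iio_of_mem_copies {a : Ordinal.{0}} {A : Set Ordinal.{0}} (h : A ∈ Copies a) :
    A ⊆ Iio a := by
  obtain ⟨f, rfl⟩ := h
  rintro _ ⟨y, -, rfl⟩
  exact y.2

theorem lift_le_typeLT_of_mem_copies {a : Ordinal.{0}} {A : Set Ordinal.{0}} (h : A ∈ Copies a) :
    lift.{1} a ≤ typeLT A := by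
  obtain ⟨f, rfl⟩ := h
  exact lift_le_typeLT_iff_nonempty.2 ⟨OrderEmbedding.ofStrictMono
    (fun x => ⟨f x, f x, mem_range_self x, rfl⟩) fun _ _ h => f.strictMono h⟩

theorem mem_copies_of_subset_Iio {a : Ordinal.{0}} {A : Set Ordinal.{0}} (hA : A ⊆ Iio a)
    (h : lift.{1} a ≤ typeLT A) : A ∈ Copies a := by
  obtain ⟨e⟩ := type_eq.1 (le_antisymm (type_lt_Iio a ▸ h) (type_mono hA))
  let e : Iio a ≃o A := .ofRelIsoLT e
  refine ⟨OrderEmbedding.ofStrictMono (fun x => ⟨e x, hA (e x).2⟩) fun _ _ h => e.strictMono h, ?_⟩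
  ext y
  constructor
  · exact fun hy => ⟨_, ⟨e.symm ⟨y, hy⟩, rfl⟩, congrArg Subtype.val (e.apply_symm_apply ⟨y, hy⟩)⟩
  · rintro ⟨_, ⟨x, rfl⟩, rfl⟩
    exact (e x).2

theorem leI_iff_typeLT_lt {a : Ordinal.{0}} {A B : Set Ordinal.{0}} :
    leI a A B ↔ typeLT ↥(A \ B) < lift.{1} a := by
  rw [leI, ← lift_le_typeLT_iff_nonempty, not_le]

theorem stmt16_general (δ : Ordinal.{0})
    (hcase : (∃ β : Ordinal, δ = β + 1) ∨ δ.cof = ℵ₀)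
    (A : ℕ → Set Ordinal) (hA : ∀ n, A n ∈ Copies (ω ^ δ))
    (hdec : ∀ n, leI (ω ^ δ) (A (n + 1)) (A n)) :
    ∃ B ∈ Copies (ω ^ δ), ∀ n, leI (ω ^ δ) B (A n) := by
  have hreg := isPartitionRegular_omega0_opow δ
  have hbig := hreg.lift_le_typeLT_dissipate (fun n => lift_le_typeLT_of_mem_copies (hA n))
    (fun n => leI_iff_typeLT_lt.1 (hdec n)) (opow_pos δ omega0_pos)
  obtain ⟨B, hBa, hB, hBA⟩ := hreg.exists_lift_le_typeLT_diff_subset_Iio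
    (cof_omega0_opow_eq_aleph0 hcase) antitone_dissipate
    (fun n => (dissipate_subset le_rfl).trans (subset_Iio_of_mem_copies (hA n))) hbig
  refine ⟨B, mem_copies_of_subset_Iio hBa hB, fun n => leI_iff_typeLT_lt.2 ?_⟩
  obtain ⟨ξ, hξ, hBξ⟩ := hBA n
  calc typeLT ↥(B \ A n) ≤ typeLT (Iio ξ) :=
        type_mono ((sdiff_subset_sdiff_right (dissipate_subset le_rfl)).trans hBξ)
    _ < lift.{1} (ω ^ δ) := by rwa [type_lt_Iio, Ordinal.lift_lt]

/-- If `δ > 0` is a successor ordinal or `cf(δ) = ω`, then `⟨P(ω^δ), ⊆_I⟩` is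
σ-closed: every `⊆_I`-decreasing `ω`-sequence of copies of `ω^δ` has a `⊆_I`-lower
bound among the copies of `ω^δ`. -/
theorem stmt16 (δ : Ordinal.{0}) (hδ : 0 < δ)
    (hcase : (∃ β : Ordinal, δ = β + 1) ∨ δ.cof = ℵ₀)
    (A : ℕ → Set Ordinal) (hA : ∀ n, A n ∈ Copies (ω ^ δ))
    (hdec : ∀ n, leI (ω ^ δ) (A (n + 1)) (A n)) :
    ∃ B ∈ Copies (ω ^ δ), ∀ n, leI (ω ^ δ) B (A n) :=
  stmt16_general δ hcase A hA hdec
end
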